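/- arXiv:1702.03194 — 8 statements merged into one kernel-verified Lean document; each statement's English description precedes it below -/
import Mathlib

section
/- Let r = [r_0, ..., r_m] and c = [c_0, ..., c_m] be strictly increasing finite sequences of natural numbers indexing rows and columns of the Pascal upper triangular matrix. Then the (m+1)×(m+1) square matrix T_{r,c} with (i,j) entry equal to the binomial coefficient C(c_j, r_i) is invertible if and only if r_i ≤ c_i for all i = 0, ..., m. -/
/-!
Both directions go through the determinant. If `c k < r k`, every entry in a row `≥ k` and a
column `≤ k` vanishes; by pigeonhole each permutation meets this zero block, so the determinant
is `0`. Conversely, the minors with `r i ≤ c i` are positive, by induction on their size. The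
identity `C(c, r) C(r, k) = C(c, k) C(c - k, r - k)` rescales rows and columns by positive
factors and so reduces to `r 0 = 0`. Then the first row is `(1, …, 1)`; subtracting from each
column its predecessor clears it except for the leading `1` and leaves the minor with entries
`C(c_{j+1}, r_i) - C(c_j, r_i) = ∑_{c_j ≤ t < c_{j+1}} C(t, r_i - 1)`. By multilinearity this is a
sum of smaller Pascal minors with strictly increasing columns, all nonnegative by induction, and
the one with columns `c_{j+1} - 1` is positive.
-/

open Finset Matrix

def pascalMatrix (R : Type*) [Semiring R] : Matrix ℕ ℕ R := of fun i j => (j.choose i : R)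

theorem Equiv.Perm.exists_le_le_apply {n : ℕ} (σ : Equiv.Perm (Fin n)) (k : Fin n) :
    ∃ i ≤ k, k ≤ σ i := by
  by_contra! h
  have := card_le_card_of_injOn σ (s := Iic k) (t := Iio k)
    (fun i hi => by simpa using h i (by simpa using hi)) σ.injective.injOn
  simp at this

theorem sum_Ico_choose_eq_sub {R : Type*} [AddCommGroupWithOne R] (k : ℕ) {a b : ℕ}
    (hab : a ≤ b) :
    ∑ t ∈ Ico a b, (t.choose k : R) = (b.choose (k + 1) : R) - a.choose (k + 1) := by
  rw [← sum_Ico_sub (fun t => (t.choose (k + 1) : R)) hab]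
  refine sum_congr rfl fun t _ => ?_
  rw [Nat.choose_succ_succ', Nat.cast_add, add_sub_cancel_right]

theorem strictMono_of_mem_piFinset_Ico {n : ℕ} {c : Fin (n + 1) → ℕ} (hc : Monotone c)
    {p : Fin n → ℕ} (hp : p ∈ Fintype.piFinset fun j => Ico (c j.castSucc) (c j.succ)) :
    StrictMono p := by
  intro a b hab
  have hp := Fintype.mem_piFinset.mp hp
  calc p a < c a.succ := (mem_Ico.mp (hp a)).2
    _ ≤ c b.castSucc := hc (Fin.succ_le_castSucc_iff.mpr hab)
    _ ≤ p b := (mem_Ico.mp (hp b)).1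

variable {R : Type*} [CommRing R]

theorem Matrix.det_of_sum_eq_sum_det {n α : Type*} [Fintype n] [DecidableEq n]
    (s : n → Finset α) (f : α → n → R) :
    (of fun i j => ∑ t ∈ s j, f t i).det =
      ∑ p ∈ Fintype.piFinset s, (of fun i j => f (p j) i).det := by
  rw [← det_transpose]
  simp_rw [← det_transpose (of fun i j => f _ i)]
  convert (detRowAlternating : (n → R) [⋀^n]→ₗ[R] R).map_sum_finset (fun _ t => f t) s using 2
  · exact congrArg detRowAlternating (funext fun j => funext fun i => by simp)
  · rfl

theorem det_pascalMatrix_submatrix_eq_zero {n : ℕ} {r c : Fin n → ℕ} (hr : Monotone r)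
    (hc : Monotone c) {k : Fin n} (hk : c k < r k) :
    ((pascalMatrix R).submatrix r c).det = 0 := by
  rw [det_apply]
  refine sum_eq_zero fun σ _ => ?_
  obtain ⟨i, hik, hkσ⟩ := σ.exists_le_le_apply k
  refine smul_eq_zero_of_right _ (prod_eq_zero (mem_univ i) ?_)
  simp [pascalMatrix, Nat.choose_eq_zero_of_lt ((hc hik).trans_lt (hk.trans_le (hr hkσ)))]

theorem prod_choose_mul_det_pascalMatrix_submatrix {n : ℕ} (r c : Fin n → ℕ) {k : ℕ}
    (hk : ∀ i, k ≤ r i) :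
    (∏ i, ((r i).choose k : R)) * ((pascalMatrix R).submatrix r c).det =
      (∏ j, ((c j).choose k : R)) *
        ((pascalMatrix R).submatrix (fun i => r i - k) (fun j => c j - k)).det := by
  rw [← det_mul_column, ← det_mul_row]
  congr 1
  ext i j
  simp only [pascalMatrix, of_apply, submatrix_apply]
  rw [← Nat.cast_mul, ← Nat.cast_mul, mul_comm, Nat.choose_mul (hk i)]

theorem det_pascalMatrix_submatrix_eq_det_sub {n : ℕ} (r c : Fin (n + 1) → ℕ) (h0 : r 0 = 0) :
    ((pascalMatrix R).submatrix r c).det =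
      (of fun i j : Fin n =>
        ((c j.succ).choose (r i.succ) : R) - (c j.castSucc).choose (r i.succ)).det := by
  rw [det_eq_of_forall_col_eq_smul_add_pred (fun _ => 1) (A := (pascalMatrix R).submatrix r c)
    (B := of fun i j => Fin.cases ((c 0).choose (r i) : R)
      (fun j => ((c j.succ).choose (r i) : R) - (c j.castSucc).choose (r i)) j)
    (fun i => rfl) (fun i j => by simp [pascalMatrix])]
  rw [det_succ_row_zero, Fin.sum_univ_succ, sum_eq_zero fun j _ => by simp [h0], add_zero]
  simp only [Fin.val_zero, pow_zero, one_mul, of_apply, Fin.cases_zero, h0, Nat.choose_zero_right,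
    Nat.cast_one, Fin.succAbove_zero]
  rfl

theorem det_pascalMatrix_submatrix_eq_sum {n : ℕ} {r c : Fin (n + 1) → ℕ} (hr : StrictMono r)
    (hc : Monotone c) (h0 : r 0 = 0) :
    ((pascalMatrix R).submatrix r c).det =
      ∑ p ∈ Fintype.piFinset fun j : Fin n => Ico (c j.castSucc) (c j.succ),
        ((pascalMatrix R).submatrix (fun i => r i.succ - 1) p).det := by
  rw [det_pascalMatrix_submatrix_eq_det_sub r c h0]
  refine (congrArg det ?_).trans
    (det_of_sum_eq_sum_det _ fun (t : ℕ) (i : Fin n) => (t.choose (r i.succ - 1) : R))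
  ext i j
  have hri : r i.succ - 1 + 1 = r i.succ := by
    have := hr i.succ_pos
    omega
  rw [of_apply, of_apply, sum_Ico_choose_eq_sub _ (hc j.castSucc_le_succ), hri]

section Ordered

variable [LinearOrder R] [IsStrictOrderedRing R]

theorem det_pascalMatrix_submatrix_pos_iff_sub {n : ℕ} {r c : Fin n → ℕ} {k : ℕ}
    (hr : ∀ i, k ≤ r i) (hc : ∀ j, k ≤ c j) :
    0 < ((pascalMatrix R).submatrix r c).det ↔
      0 < ((pascalMatrix R).submatrix (fun i => r i - k) (fun j => c j - k)).det := by
  have hpos {s : Fin n → ℕ} (hs : ∀ i, k ≤ s i) : 0 < ∏ i, ((s i).choose k : R) :=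
    prod_pos fun i _ => Nat.cast_pos.mpr (Nat.choose_pos (hs i))
  rw [← mul_pos_iff_of_pos_left (hpos hr), prod_choose_mul_det_pascalMatrix_submatrix r c hr,
    mul_pos_iff_of_pos_left (hpos hc)]

theorem det_pascalMatrix_submatrix_pos_of_zero {n : ℕ}
    (ih : ∀ {r c : Fin n → ℕ}, StrictMono r → StrictMono c → (∀ i, r i ≤ c i) →
      0 < ((pascalMatrix R).submatrix r c).det)
    {r c : Fin (n + 1) → ℕ} (hr : StrictMono r) (hc : StrictMono c) (hrc : ∀ i, r i ≤ c i)
    (h0 : r 0 = 0) : 0 < ((pascalMatrix R).submatrix r c).det := by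
  have hr_succ (i : Fin n) : 0 < r i.succ := h0 ▸ hr i.succ_pos
  have hr' : StrictMono fun i : Fin n => r i.succ - 1 := fun a b hab => by
    dsimp only
    have := hr (Fin.succ_lt_succ_iff.mpr hab)
    have := hr_succ a
    omega
  have nonneg {p : Fin n → ℕ} (hp : StrictMono p) :
      0 ≤ ((pascalMatrix R).submatrix (fun i => r i.succ - 1) p).det := by
    by_cases h : ∀ i, r i.succ - 1 ≤ p i
    · exact (ih hr' hp h).le
    · obtain ⟨k, hk⟩ := not_forall.mp h
      exact (det_pascalMatrix_submatrix_eq_zero hr'.monotone hp.monotone (not_le.mp hk)).ge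
  rw [det_pascalMatrix_submatrix_eq_sum hr hc.monotone h0]
  refine sum_pos' (fun p hp => nonneg (strictMono_of_mem_piFinset_Ico hc.monotone hp))
    ⟨fun j => c j.succ - 1, Fintype.mem_piFinset.mpr fun j => mem_Ico.mpr ⟨?_, ?_⟩,
      ih hr' (fun a b hab => ?_) fun i => ?_⟩
  · have := hc j.castSucc_lt_succ
    omega
  · have := hr_succ j
    have := hrc j.succ
    omega
  · have := hc (Fin.succ_lt_succ_iff.mpr hab)
    have := hr_succ a
    have := hrc a.succ
    omega
  · have := hrc i.succ
    omega

theorem det_pascalMatrix_submatrix_pos {n : ℕ} {r c : Fin n → ℕ} (hr : StrictMono r)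
    (hc : StrictMono c) (hrc : ∀ i, r i ≤ c i) :
    0 < ((pascalMatrix R).submatrix r c).det := by
  induction n with
  | zero => simp
  | succ n ih =>
    have hr0 (i : Fin (n + 1)) : r 0 ≤ r i := hr.monotone (Fin.zero_le i)
    have hc0 (j : Fin (n + 1)) : r 0 ≤ c j := (hrc 0).trans (hc.monotone (Fin.zero_le j))
    rw [det_pascalMatrix_submatrix_pos_iff_sub hr0 hc0]
    refine det_pascalMatrix_submatrix_pos_of_zero ih (fun a b hab => ?_) (fun a b hab => ?_)
      (fun i => Nat.sub_le_sub_right (hrc i) _) (Nat.sub_self _)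
    · have := hr hab
      have := hr0 a
      omega
    · have := hc hab
      have := hc0 a
      omega

theorem det_pascalMatrix_submatrix_ne_zero_iff {n : ℕ} {r c : Fin n → ℕ} (hr : StrictMono r)
    (hc : StrictMono c) : ((pascalMatrix R).submatrix r c).det ≠ 0 ↔ ∀ i, r i ≤ c i := by
  refine ⟨fun hdet i => ?_, fun hrc => (det_pascalMatrix_submatrix_pos hr hc hrc).ne'⟩
  by_contra! hi
  exact hdet (det_pascalMatrix_submatrix_eq_zero hr.monotone hc.monotone hi)

end Ordered

/-- The square submatrix of the Pascal upper-triangular matrix with rows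
`r 0, …, r m` and columns `c 0, …, c m`: its `(i,j)` entry is the binomial
coefficient `C(c j, r i)` (which is `0` when `r i > c j`).  It is invertible
iff `r i ≤ c i` for all `i = 0, …, m`. -/
theorem pascal_square_submatrix_invertible_iff
    (m : ℕ) (r c : ℕ → ℕ) (hr : StrictMono r) (hc : StrictMono c) :
    IsUnit (Matrix.of fun i j : Fin (m + 1) =>
        ((c (j : ℕ)).choose (r (i : ℕ)) : ℚ)) ↔
      ∀ i ≤ m, r i ≤ c i := by
  rw [isUnit_iff_isUnit_det, isUnit_iff_ne_zero]
  refine (det_pascalMatrix_submatrix_ne_zero_iff (hr.comp Fin.val_strictMono)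
    (hc.comp Fin.val_strictMono)).trans ⟨fun h i hi => ?_, fun h i => ?_⟩
  · exact h ⟨i, Nat.lt_succ_of_le hi⟩
  · exact h i (Nat.le_of_lt_succ i.is_lt)
end

section
/- Let r = [r_0, ..., r_m] and c = [c_0, ..., c_m] be strictly increasing finite sequences of natural numbers. Then the square matrix T_{r,c} with (i,j) entry C(c_j, r_i) is invertible if and only if no diagonal entry is zero, i.e., if and only if C(c_i, r_i) ≠ 0 for all i = 0, ..., m. -/
/-!
Pascal's rule `C(c + 1, r) = C(c, r) + C(c, r - 1)`, applied to every row, expands the determinant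
of a Pascal minor into a sum of determinants of Pascal minors whose column indices are all lowered
by one and whose row indices are lowered on a subset of the rows. By induction (on the size, and
on the first column index), all of these determinants are nonnegative, and when `r ≤ c` the term
lowering exactly the rows with `r i = c i + 1` is again a Pascal minor with `r ≤ c`, hence positive.
Conversely, if `c i < r i`, the entries in rows `≥ i` and columns `≤ i` vanish, and a zero block of
size `(m + 1 - i) × (i + 1)` forces the determinant to vanish.
-/

open Matrix Finset Function

theorem Matrix.det_eq_zero_of_zero_block {ι R : Type*} [Fintype ι] [DecidableEq ι] [CommRing R]
    (A : Matrix ι ι R) (S T : Finset ι) (hST : Fintype.card ι < #S + #T)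
    (hA : ∀ i ∈ S, ∀ j ∈ T, A i j = 0) : A.det = 0 := by
  rw [det_apply]
  refine sum_eq_zero fun σ _ => ?_
  obtain ⟨j, hjT, hjS⟩ : ∃ j ∈ T, σ j ∈ S := by
    obtain ⟨i, hi⟩ := inter_nonempty_of_card_lt_card_add_card
      (subset_univ (T.map σ.toEmbedding)) (subset_univ S) (by simpa [add_comm] using hST)
    simp only [mem_inter, mem_map_equiv] at hi
    exact ⟨σ.symm i, hi.1, by simpa using hi.2⟩
  exact smul_eq_zero_of_right _ (prod_eq_zero (mem_univ j) (hA _ hjS _ hjT))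

theorem StrictMono.monotone_piecewise_sub_one {ι : Type*} [PartialOrder ι] [DecidableEq ι]
    {r : ι → ℕ} (hr : StrictMono r) (s : Finset ι) :
    Monotone (s.piecewise (fun i => r i - 1) r) := by
  intro i j hij
  rcases hij.lt_or_eq with h | rfl
  · have := hr h
    simp only [Finset.piecewise]
    split_ifs <;> omega
  · rfl

section

variable (R : Type*) [CommRing R] {n : ℕ}

def pascalMinor (r c : Fin n → ℕ) : Matrix (Fin n) (Fin n) R :=
  of fun i j => ((c j).choose (r i) : R)

variable {R}

theorem det_pascalMinor_eq_zero_of_lt {r c : Fin n → ℕ} (hr : Monotone r) (hc : Monotone c)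
    {i : Fin n} (h : c i < r i) : det (pascalMinor R r c) = 0 := by
  refine det_eq_zero_of_zero_block _ (Ici i) (Iic i)
    (by simp only [Fintype.card_fin, Fin.card_Ici, Fin.card_Iic]; omega) fun t ht j hj => ?_
  rw [mem_Ici] at ht
  rw [mem_Iic] at hj
  simp [pascalMinor, Nat.choose_eq_zero_of_lt ((hc hj).trans_lt (h.trans_le (hr ht)))]

theorem det_pascalMinor_eq_zero_of_not_injective {r : Fin n → ℕ} (hr : ¬Injective r)
    (c : Fin n → ℕ) : det (pascalMinor R r c) = 0 := by
  obtain ⟨i, j, hij, hne⟩ := not_injective_iff.mp hr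
  exact det_zero_of_row_eq hne (funext fun k => by simp [pascalMinor, hij])

theorem det_pascalMinor_eq_comp_succ {r c : Fin (n + 1) → ℕ} (hr : StrictMono r)
    (hr0 : r 0 = 0) (hc0 : c 0 = 0) :
    det (pascalMinor R r c) = det (pascalMinor R (r ∘ Fin.succ) (c ∘ Fin.succ)) := by
  rw [det_succ_column_zero, Fin.sum_univ_succ, sum_eq_zero fun i _ => ?_]
  · simp [pascalMinor, hr0, hc0]
    rfl
  · have : 0 < r i.succ := hr0 ▸ hr (Fin.succ_pos i)
    simp [pascalMinor, hc0, Nat.choose_eq_zero_of_lt this]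

theorem det_pascalMinor_add_one (r c : Fin n → ℕ) :
    det (pascalMinor R r (fun j => c j + 1)) =
      ∑ s ∈ (univ.filter fun i => r i ≠ 0).powerset,
        det (pascalMinor R (s.piecewise (fun i => r i - 1) r) c) := by
  -- A row with `r i = 0` does not split: its `C(c, r i - 1)` part is the zero row.
  set v : Matrix (Fin n) (Fin n) R :=
    of fun i j => if r i = 0 then 0 else ((c j).choose (r i - 1) : R)
  have hsplit : pascalMinor R r (fun j => c j + 1) = v + pascalMinor R r c := by
    ext i j
    rcases h : r i with _ | k
    · simp [pascalMinor, v, h]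
    · simp [pascalMinor, v, h, Nat.choose_succ_succ']
  rw [hsplit]
  refine (detRowAlternating.map_add_univ (of.symm v) (of.symm (pascalMinor R r c))).trans ?_
  symm
  rw [← sum_subset (subset_univ _) fun s _ hs => ?_]
  · refine sum_congr rfl fun s hs => congrArg detRowAlternating (funext₂ fun i j => ?_)
    by_cases hi : i ∈ s
    · have : r i ≠ 0 := by simpa using mem_powerset.mp hs hi
      simp [pascalMinor, v, hi, this]
    · simp [pascalMinor, hi]
  · obtain ⟨i, hi, hri⟩ : ∃ i ∈ s, r i = 0 := by simpa [subset_iff] using hs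
    refine det_eq_zero_of_row_eq_zero
      (A := of (s.piecewise (of.symm v) (of.symm (pascalMinor R r c)))) i fun j => ?_
    simp [piecewise_eq_of_mem _ _ _ hi, v, hri]

variable [PartialOrder R] [IsStrictOrderedRing R]

theorem det_pascalMinor_nonneg_of_strictMono {r c : Fin n → ℕ} (hr : StrictMono r)
    (hc : Monotone c) : 0 ≤ det (pascalMinor R r c) := by
  induction n with
  | zero => simp
  | succ n ihn =>
    obtain ⟨k, hk⟩ : ∃ k, c 0 = k := ⟨_, rfl⟩
    induction k generalizing r c with
    | zero =>
      by_cases hr0 : r 0 = 0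
      · rw [det_pascalMinor_eq_comp_succ hr hr0 hk]
        exact ihn (hr.comp Fin.strictMono_succ) (hc.comp Fin.strictMono_succ.monotone)
      · rw [det_pascalMinor_eq_zero_of_lt hr.monotone hc (i := 0) (by omega)]
    | succ k ihk =>
      obtain ⟨c, rfl⟩ : ∃ c', c = fun j => c' j + 1 :=
        ⟨fun j => c j - 1, funext fun j => by
          have : k + 1 ≤ c j := hk ▸ hc (Fin.zero_le j)
          simp only
          omega⟩
      rw [det_pascalMinor_add_one]
      refine sum_nonneg fun s _ => ?_
      by_cases hinj : Injective (s.piecewise (fun i => r i - 1) r)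
      · exact ihk ((hr.monotone_piecewise_sub_one s).strictMono_of_injective hinj)
          (fun i j h => by simpa using hc h) (by simpa using hk)
      · rw [det_pascalMinor_eq_zero_of_not_injective hinj]

theorem det_pascalMinor_nonneg {r c : Fin n → ℕ} (hr : Monotone r) (hc : Monotone c) :
    0 ≤ det (pascalMinor R r c) := by
  by_cases hinj : Injective r
  · exact det_pascalMinor_nonneg_of_strictMono (hr.strictMono_of_injective hinj) hc
  · rw [det_pascalMinor_eq_zero_of_not_injective hinj]

theorem det_pascalMinor_pos {r c : Fin n → ℕ} (hr : StrictMono r) (hc : StrictMono c)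
    (hrc : ∀ i, r i ≤ c i) : 0 < det (pascalMinor R r c) := by
  induction n with
  | zero => simp
  | succ n ihn =>
    obtain ⟨k, hk⟩ : ∃ k, c 0 = k := ⟨_, rfl⟩
    induction k generalizing r c with
    | zero =>
      have hr0 : r 0 = 0 := by have := hrc 0; omega
      rw [det_pascalMinor_eq_comp_succ hr hr0 hk]
      exact ihn (hr.comp Fin.strictMono_succ) (hc.comp Fin.strictMono_succ) fun i => hrc i.succ
    | succ k ihk =>
      obtain ⟨c, rfl⟩ : ∃ c', c = fun j => c' j + 1 :=
        ⟨fun j => c j - 1, funext fun j => by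
          have : k + 1 ≤ c j := hk ▸ hc.monotone (Fin.zero_le j)
          simp only
          omega⟩
      have hc' : StrictMono c := fun i j h => by simpa using hc h
      have hlower : (univ.filter fun i => c i < r i).piecewise (fun i => r i - 1) r =
          fun i => min (r i) (c i) := by
        funext i
        have : r i ≤ c i + 1 := hrc i
        by_cases h : c i < r i
        · simp only [piecewise, mem_filter, mem_univ, true_and, h, if_true]
          omega
        · simp only [piecewise, mem_filter, mem_univ, true_and, h, if_false]
          omega
      rw [det_pascalMinor_add_one]
      refine sum_pos'
        (fun s _ => det_pascalMinor_nonneg (hr.monotone_piecewise_sub_one s) hc'.monotone)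
        ⟨univ.filter fun i => c i < r i, ?_, ?_⟩
      · simp only [mem_powerset, subset_iff, mem_filter, mem_univ, true_and]
        intro i h
        omega
      · rw [hlower]
        exact ihk (fun i j h => min_lt_min (hr h) (hc' h)) hc' (fun i => min_le_right _ _)
          (by simpa using hk)

theorem det_pascalMinor_ne_zero_iff {r c : Fin n → ℕ} (hr : StrictMono r) (hc : StrictMono c) :
    det (pascalMinor R r c) ≠ 0 ↔ ∀ i, r i ≤ c i :=
  ⟨fun h _ => not_lt.mp fun hi => h (det_pascalMinor_eq_zero_of_lt hr.monotone hc.monotone hi),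
    fun h => (det_pascalMinor_pos hr hc h).ne'⟩

end

/-- The square submatrix of the Pascal upper-triangular matrix with rows
`r 0, …, r m` and columns `c 0, …, c m` (entry `(i,j)` equal to `C(c j, r i)`)
is invertible iff no diagonal entry is zero, i.e. iff `C(c i, r i) ≠ 0`
for all `i = 0, …, m`. -/
theorem pascal_square_submatrix_invertible_iff_diagonal_ne_zero
    (m : ℕ) (r c : ℕ → ℕ) (hr : StrictMono r) (hc : StrictMono c) :
    IsUnit (Matrix.of fun i j : Fin (m + 1) =>
        ((c (j : ℕ)).choose (r (i : ℕ)) : ℚ)) ↔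
      ∀ i ≤ m, (c i).choose (r i) ≠ 0 := by
  rw [isUnit_iff_isUnit_det, isUnit_iff_ne_zero]
  refine (det_pascalMinor_ne_zero_iff (hr.comp Fin.val_strictMono)
    (hc.comp Fin.val_strictMono)).trans ?_
  simp [Fin.forall_iff, Nat.choose_eq_zero_iff]
end

section
/- Let r = [r_0, ..., r_m] and c = [c_0, ..., c_n] be strictly increasing sequences of natural numbers, and let {r̂, ĉ} be an ordered sub-pair for {r, c} of length p+1. Then the (m+1)×(p+1) matrix T_{r,ĉ} with (i,j) entry C(ĉ_j, r_i) has full column rank, i.e., its rank equals p+1. -/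
/-!
Restricting to the rows `r (α i)` leaves the square matrix `(C(b j, a i))`, where
`a i = r (α i)` and `b j = c (β j)` are strictly increasing and `a i ≤ b i`; it suffices that this
matrix is nonsingular. A vanishing combination `P x = ∑ μ i C(x, a i)` of its rows, with `s`
nonzero coefficients of which the first is `μ i₀`, vanishes at the `≥ s` points `b j`, `j ≥ i₀`,
all of them `≥ a i₀`. This is impossible by a discrete Descartes rule of signs: a combination of
`s` binomial columns `C(x, k)` has fewer than `s` zeros and sign changes on the integers from its
lowest exponent on. The rule follows by induction on the degree from a discrete Rolle theorem (a
sequence has at most one more zero or sign change than its forward difference), because the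
forward difference of `∑ ν k C(x, k)` is `∑ ν (k + 1) C(x, k)`, and just below its lowest
exponent the sum either vanishes or is a nonzero constant; either way Rolle's `+ 1` is absorbed.
-/

/-- The submatrix of the Pascal upper-triangular matrix with rows
`r 0, …, r m` and columns `c 0, …, c n`: its `(i,j)` entry is the binomial
coefficient `C(c j, r i)` (which is `0` when `r i > c j`). -/
def pascalSub (r c : ℕ → ℕ) (m n : ℕ) : Matrix (Fin (m + 1)) (Fin (n + 1)) ℚ :=
  Matrix.of fun i j => ((c (j : ℕ)).choose (r (i : ℕ)) : ℚ)

/-- `{r ∘ α, c ∘ β}` (restricted to indices `0, …, p`) is an ordered sub-pair of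
length `p + 1` for the pair of finite sequences `[r 0, …, r m]`, `[c 0, …, c n]`:
`α` and `β` are strictly increasing selections of indices (so `r ∘ α` is a
subsequence of `[r 0, …, r m]` and `c ∘ β` is a subsequence of `[c 0, …, c n]`)
and `r (α i) ≤ c (β i)` for all `i = 0, …, p`. -/
def OrderedSubPair (r c : ℕ → ℕ) (m n p : ℕ) (α β : ℕ → ℕ) : Prop :=
  StrictMonoOn α (Set.Iic p) ∧ StrictMonoOn β (Set.Iic p) ∧
    α p ≤ m ∧ β p ≤ n ∧ ∀ i ≤ p, r (α i) ≤ c (β i)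

open Finset
open scoped fwdDiff

lemma sum_range_extend {ι R M : Type*} [Fintype ι] [Zero R] [AddCommMonoid M] {a : ι → ℕ}
    (ha : Function.Injective a) {d : ℕ} (had : ∀ i, a i < d) (μ : ι → R) {F : R → ℕ → M}
    (hF : ∀ k, F 0 k = 0) :
    ∑ k ∈ range d, F (Function.extend a μ 0 k) k = ∑ i, F (μ i) (a i) := by
  rw [← sum_subset (s₁ := univ.image a) (fun k hk => ?_) (fun k _ hk => ?_),
    sum_image fun i _ j _ h => ha h]
  · simp [ha.extend_apply]
  · obtain ⟨i, -, rfl⟩ := mem_image.1 hk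
    exact mem_range.2 (had i)
  · rw [Function.extend_apply' _ _ _ (by simpa using hk)]
    exact hF k

section

variable {R : Type*} [CommRing R]

lemma fwdDiff_sum_choose (ν : ℕ → R) (d : ℕ) :
    Δ_[1] (fun x : ℕ => ∑ k ∈ range (d + 1), ν k * (x.choose k : R)) =
      fun x => ∑ k ∈ range d, ν (k + 1) * (x.choose k : R) := by
  ext x
  simp [fwdDiff, sum_range_succ', Nat.choose_succ_succ', mul_add, sum_add_distrib]

lemma sum_range_choose_eq_zero {ν : ℕ → R} {d x : ℕ} (hν : ∀ k ≤ x, ν k = 0) :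
    ∑ k ∈ range d, ν k * (x.choose k : R) = 0 :=
  sum_eq_zero fun k _ => by
    rcases le_or_gt k x with h | h
    · simp [hν k h]
    · simp [Nat.choose_eq_zero_of_lt h]

lemma sum_range_succ_choose_eq_head {ν : ℕ → R} {d x : ℕ} (hν : ∀ k < d, ν (k + 1) = 0 ∨ x ≤ k) :
    ∑ k ∈ range (d + 1), ν k * (x.choose k : R) = ν 0 := by
  simp only [sum_range_succ', Nat.choose_zero_right, Nat.cast_one, mul_one]
  rw [sum_eq_zero fun k hk => ?_, zero_add]
  rcases hν k (mem_range.1 hk) with h | h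
  · simp [h]
  · simp [Nat.choose_eq_zero_of_lt (Nat.lt_succ_of_le h)]

variable [LinearOrder R]

def zerosAndSignChanges (f : ℕ → R) (L n : ℕ) : ℕ :=
  #{x ∈ range (n + 1) | f (L + x) = 0} + #{x ∈ range n | f (L + x) * f (L + x + 1) < 0}

@[simp]
lemma zerosAndSignChanges_zero (f : ℕ → R) (L : ℕ) :
    zerosAndSignChanges f L 0 = if f L = 0 then 1 else 0 := by
  simp only [zerosAndSignChanges, card_filter, zero_add, range_zero, sum_empty, range_one,
    sum_singleton, add_zero]

lemma zerosAndSignChanges_succ (f : ℕ → R) (L n : ℕ) :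
    zerosAndSignChanges f L (n + 1) = zerosAndSignChanges f L n +
      ((if f (L + n + 1) = 0 then 1 else 0) + if f (L + n) * f (L + n + 1) < 0 then 1 else 0) := by
  simp only [zerosAndSignChanges, card_filter, sum_range_succ _ (n + 1), sum_range_succ _ n,
    ← add_assoc]
  omega

lemma zerosAndSignChanges_add (f : ℕ → R) (L d n : ℕ) :
    zerosAndSignChanges f L (d + n) + (if f (L + d) = 0 then 1 else 0) =
      zerosAndSignChanges f L d + zerosAndSignChanges f (L + d) n := by
  induction n with
  | zero => simp
  | succ n ih =>
    rw [← add_assoc, zerosAndSignChanges_succ, zerosAndSignChanges_succ, ← add_assoc L d n]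
    omega

lemma zerosAndSignChanges_succ_left (f : ℕ → R) (L n : ℕ) :
    zerosAndSignChanges f L (n + 1) = (if f L = 0 then 1 else 0) +
      (if f L * f (L + 1) < 0 then 1 else 0) + zerosAndSignChanges f (L + 1) n := by
  have := zerosAndSignChanges_add f L 1 n
  rw [zerosAndSignChanges_succ, zerosAndSignChanges_zero, add_zero, add_comm 1 n] at this
  omega

lemma zerosAndSignChanges_monotone (f : ℕ → R) (L : ℕ) : Monotone (zerosAndSignChanges f L) :=
  monotone_nat_of_le_succ fun n => by rw [zerosAndSignChanges_succ]; omega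

variable [IsStrictOrderedRing R]

lemma zerosAndSignChanges_eq_zero_of_const {f : ℕ → R} {L n : ℕ} {c : R} (hc : c ≠ 0)
    (hf : ∀ x ≤ n, f (L + x) = c) : zerosAndSignChanges f L n = 0 := by
  induction n with
  | zero => simp [show f L = c from hf 0 le_rfl, hc]
  | succ n ih =>
    rw [zerosAndSignChanges_succ, ih fun x hx => hf x (by omega),
      show f (L + n) = c from hf n (by omega), show f (L + n + 1) = c from hf (n + 1) le_rfl]
    simp [hc, mul_self_nonneg]

lemma ite_mul_neg_le_ite_mul_neg_add (a d u : R) :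
    (if a * d < 0 then 1 else 0 : ℕ) ≤
      (if u * d < 0 then 1 else 0) + if a ≠ 0 ∧ a * u ≤ 0 then 1 else 0 := by
  by_cases had : a * d < 0
  · have ha : a ≠ 0 := by rintro rfl; simp at had
    by_cases hau : a * u ≤ 0
    · simp [had, ha, hau]
    · have hud : u * d < 0 := by
        nlinarith [mul_neg_of_neg_of_pos had (not_le.mp hau), sq_nonneg a]
      simp [had, hud]
  · simp [had]

lemma ite_zero_add_ite_mul_neg_le {a b d : R} (hd : b - a = d) :
    ((if b = 0 then 1 else 0) + (if a * b < 0 then 1 else 0) +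
        if b ≠ 0 ∧ b * d ≤ 0 then 1 else 0 : ℕ) ≤
      (if d = 0 then 1 else 0) + if a * d < 0 then 1 else 0 := by
  subst hd
  rcases eq_or_ne b 0 with rfl | hb
  · rcases eq_or_ne a 0 with rfl | ha
    · simp
    · simp [ha, mul_self_pos.2 ha]
  rcases lt_or_ge (a * b) 0 with hab | hab
  · have : ¬ b * (b - a) ≤ 0 := by nlinarith [mul_self_pos.2 hb]
    have : a * (b - a) < 0 := by nlinarith [sq_nonneg a]
    simp [*]
  · rcases eq_or_ne (b - a) 0 with hd | hd
    · simp [hb, hd, not_lt.2 hab]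
    by_cases hbd : b * (b - a) ≤ 0
    · have : a * (b - a) < 0 := by nlinarith [mul_self_pos.2 hd]
      simp [*, not_lt.2 hab]
    · simp [*, not_lt.2 hab]

theorem zerosAndSignChanges_le_fwdDiff_add_one (f : ℕ → R) (L n : ℕ) :
    zerosAndSignChanges f L (n + 1) ≤ zerosAndSignChanges (Δ_[1] f) L n + 1 := by
  -- The extra term is `1` while `f` is nonzero and moving towards `0`: the slack `+ 1` is then
  -- reserved for the next zero or sign change of `f`, which may come without one of `Δ_[1] f`.
  suffices h : ∀ n, zerosAndSignChanges f L (n + 1) +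
      (if f (L + n + 1) ≠ 0 ∧ f (L + n + 1) * Δ_[1] f (L + n) ≤ 0 then 1 else 0) ≤
        zerosAndSignChanges (Δ_[1] f) L n + 1 from (Nat.le_add_right _ _).trans (h n)
  intro n
  induction n with
  | zero =>
    have h₁ := ite_zero_add_ite_mul_neg_le (a := f L) (b := f (L + 1)) (d := Δ_[1] f L) rfl
    have h₂ : (if f L = 0 then 1 else 0) + (if f L * Δ_[1] f L < 0 then 1 else 0) ≤ 1 := by
      split_ifs with h <;> simp_all
    simp only [zerosAndSignChanges_succ, zerosAndSignChanges_zero, add_zero]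
    omega
  | succ n ih =>
    have h₁ := ite_zero_add_ite_mul_neg_le (a := f (L + n + 1)) (b := f (L + n + 1 + 1))
      (d := Δ_[1] f (L + n + 1)) rfl
    have h₂ := ite_mul_neg_le_ite_mul_neg_add (f (L + n + 1)) (Δ_[1] f (L + n + 1))
      (Δ_[1] f (L + n))
    rw [zerosAndSignChanges_succ f L (n + 1), zerosAndSignChanges_succ (Δ_[1] f) L n,
      ← add_assoc L n 1]
    omega

lemma zerosAndSignChanges_le_fwdDiff_of_eq_zero {f : ℕ → R} {L : ℕ} (hf : f L = 0) (n : ℕ) :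
    zerosAndSignChanges f (L + 1) n ≤ zerosAndSignChanges (Δ_[1] f) L n := by
  have := zerosAndSignChanges_le_fwdDiff_add_one f L n
  rw [zerosAndSignChanges_succ_left, hf] at this
  simp only [if_true, zero_mul, lt_irrefl, if_false] at this
  omega

lemma zerosAndSignChanges_le_fwdDiff_of_const {f : ℕ → R} {L L' : ℕ} {c : R} (hc : c ≠ 0)
    (hf : ∀ x ≤ L', f (L + x) = c) (n : ℕ) :
    zerosAndSignChanges f L n ≤ zerosAndSignChanges (Δ_[1] f) (L + L') n + 1 := by
  have hsplit := zerosAndSignChanges_add f L L' (n + 1)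
  rw [zerosAndSignChanges_eq_zero_of_const hc hf, hf L' le_rfl, if_neg hc] at hsplit
  have := zerosAndSignChanges_monotone f L (show n ≤ L' + (n + 1) by omega)
  have := zerosAndSignChanges_le_fwdDiff_add_one f (L + L') n
  omega

theorem zerosAndSignChanges_sum_choose_lt {ν : ℕ → R} {L d : ℕ} (hLd : L < d)
    (hlow : ∀ k < L, ν k = 0) (hL : ν L ≠ 0) (n : ℕ) :
    zerosAndSignChanges (fun x => ∑ k ∈ range d, ν k * (x.choose k : R)) L n <
      #{k ∈ range d | ν k ≠ 0} := by
  induction d generalizing ν L with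
  | zero => omega
  | succ d ih =>
  set P : ℕ → R := fun x => ∑ k ∈ range (d + 1), ν k * (x.choose k : R)
  have hΔ := fwdDiff_sum_choose ν d
  have hcard : #{k ∈ range (d + 1) | ν k ≠ 0} =
      #{k ∈ range d | ν (k + 1) ≠ 0} + if ν 0 ≠ 0 then 1 else 0 := by
    simp only [card_filter, sum_range_succ']
  cases L with
  | succ L =>
    rw [hcard, if_neg (not_not.2 (hlow 0 L.succ_pos)), add_zero]
    calc zerosAndSignChanges P (L + 1) n
        ≤ zerosAndSignChanges (Δ_[1] P) L n := zerosAndSignChanges_le_fwdDiff_of_eq_zero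
          (sum_range_choose_eq_zero fun k hk => hlow k (by omega)) n
      _ < _ := hΔ ▸ ih (ν := fun k => ν (k + 1)) (by omega) (fun k hk => hlow _ (by omega)) hL
  | zero =>
    rw [hcard, if_pos hL]
    by_cases hrest : ∃ k < d, ν (k + 1) ≠ 0
    · set L' := Nat.find hrest
      obtain ⟨hL'd, hL'ν⟩ : L' < d ∧ ν (L' + 1) ≠ 0 := Nat.find_spec hrest
      have hbelow : ∀ k < L', ν (k + 1) = 0 := fun k hk => by
        by_contra h
        exact Nat.find_min hrest hk ⟨by omega, h⟩
      have hconst : ∀ x ≤ L', P (0 + x) = ν 0 := fun x hx => sum_range_succ_choose_eq_head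
        fun k _ => (lt_or_ge k L').imp (hbelow k) (by omega)
      have := zerosAndSignChanges_le_fwdDiff_of_const hL hconst n
      rw [hΔ, zero_add] at this
      have := ih hL'd hbelow hL'ν
      omega
    · push Not at hrest
      rw [zerosAndSignChanges_eq_zero_of_const (L := 0) hL fun x _ =>
        sum_range_succ_choose_eq_head fun k hk => Or.inl (hrest k hk)]
      omega

theorem card_zeros_sum_choose_lt {ν : ℕ → R} {L d : ℕ} (hLd : L < d) (hlow : ∀ k < L, ν k = 0)
    (hL : ν L ≠ 0) {Y : Finset ℕ}
    (hY : ∀ y ∈ Y, L ≤ y ∧ ∑ k ∈ range d, ν k * (y.choose k : R) = 0) :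
    #Y < #{k ∈ range d | ν k ≠ 0} := by
  set P : ℕ → R := fun x => ∑ k ∈ range d, ν k * (x.choose k : R)
  calc #Y ≤ #{x ∈ range (Y.sup id + 1) | P (L + x) = 0} :=
        card_le_card_of_injOn (· - L) (fun y hy => ?_) fun y hy y' hy' h => ?_
    _ ≤ zerosAndSignChanges P L (Y.sup id) := Nat.le_add_right _ _
    _ < _ := zerosAndSignChanges_sum_choose_lt hLd hlow hL _
  · have : y ≤ Y.sup id := le_sup (f := id) hy
    rw [mem_coe, mem_filter, mem_range, Nat.add_sub_cancel' (hY y hy).1]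
    exact ⟨by simp only; omega, (hY y hy).2⟩
  · have := (hY y hy).1
    have := (hY y' hy').1
    simp only at h
    omega

theorem det_choose_ne_zero {n : ℕ} {a b : Fin n → ℕ} (ha : StrictMono a) (hb : StrictMono b)
    (hab : ∀ i, a i ≤ b i) : (Matrix.of fun i j => ((b j).choose (a i) : R)).det ≠ 0 := by
  intro hdet
  obtain ⟨μ, hμ, hμS⟩ := Matrix.exists_vecMul_eq_zero_iff.mpr hdet
  set supp : Finset (Fin n) := {i | μ i ≠ 0} with hsupp_def
  have hsupp : supp.Nonempty := by
    obtain ⟨i, hi⟩ := Function.ne_iff.mp hμ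
    exact ⟨i, by simpa [supp] using hi⟩
  set i₀ := supp.min' hsupp
  set ν : ℕ → R := Function.extend a μ 0
  have hνa : ∀ i, ν (a i) = μ i := ha.injective.extend_apply μ 0
  set d := univ.sup a + 1
  have had : ∀ i, a i < d := fun i => Nat.lt_succ_of_le (le_sup (mem_univ i))
  have hcard : #{k ∈ range d | ν k ≠ 0} = #supp := by
    rw [hsupp_def, card_filter, card_filter]
    exact sum_range_extend ha.injective had μ (F := fun c _ => if c ≠ 0 then 1 else 0) (by simp)
  have hlow : ∀ k < a i₀, ν k = 0 := by
    intro k hk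
    by_cases hka : ∃ i, a i = k
    · obtain ⟨i, rfl⟩ := hka
      rw [hνa]
      by_contra hi
      exact (ha.lt_iff_lt.1 hk).not_ge (supp.min'_le i (by simpa [supp] using hi))
    · exact Function.extend_apply' μ (0 : ℕ → R) k hka
  have hzero : ∀ j, ∑ k ∈ range d, ν k * ((b j).choose k : R) = 0 := by
    intro j
    refine (sum_range_extend ha.injective had μ (F := fun c k => c * ((b j).choose k : R))
      fun _ => zero_mul _).trans ?_
    simpa [Matrix.vecMul, dotProduct] using congrFun hμS j
  have hY : #({j | i₀ ≤ j} : Finset (Fin n)) < #supp := by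
    rw [← hcard, ← card_image_of_injective _ hb.injective]
    refine card_zeros_sum_choose_lt (had i₀) hlow ?_ fun y hy => ?_
    · rw [hνa]
      exact (mem_filter.1 (supp.min'_mem hsupp)).2
    · obtain ⟨j, hj, rfl⟩ := mem_image.1 hy
      exact ⟨(hab i₀).trans (hb.monotone (mem_filter.1 hj).2), hzero j⟩
  exact hY.not_ge (card_le_card fun i hi => mem_filter.2 ⟨mem_univ i, supp.min'_le i hi⟩)

end

theorem Matrix.rank_of_isUnit_submatrix {m n K : Type*} [Fintype n] [DecidableEq n] [CommRing K]
    [StrongRankCondition K] (A : Matrix m n K) (e : n → m) (h : IsUnit (A.submatrix e id)) :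
    A.rank = Fintype.card n :=
  le_antisymm A.rank_le_card_width (rank_of_isUnit _ h ▸ rank_submatrix_le A e id)

/-- If `{r ∘ α, c ∘ β}` is an ordered sub-pair of length `p + 1` for
`{[r 0, …, r m], [c 0, …, c n]}`, then the `(m+1) × (p+1)` Pascal submatrix
`T_{r,ĉ}`, with `(i,j)` entry `C(c (β j), r i)`, has full column rank `p + 1`. -/
theorem pascal_orderedSubPair_full_column_rank
    (m n p : ℕ) (r c α β : ℕ → ℕ) (hr : StrictMono r) (hc : StrictMono c)
    (hsub : OrderedSubPair r c m n p α β) :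
    (Matrix.of fun (i : Fin (m + 1)) (j : Fin (p + 1)) =>
        ((c (β (j : ℕ))).choose (r (i : ℕ)) : ℚ)).rank = p + 1 := by
  obtain ⟨hα, hβ, hαm, -, hrc⟩ := hsub
  have hIic (i : Fin (p + 1)) : (i : ℕ) ∈ Set.Iic p := Set.mem_Iic.2 i.is_le
  have hdet := det_choose_ne_zero (R := ℚ) (a := fun i : Fin (p + 1) => r (α i))
    (b := fun j : Fin (p + 1) => c (β j)) (fun i j h => hr (hα (hIic i) (hIic j) h))
    (fun i j h => hc (hβ (hIic i) (hIic j) h)) fun i => hrc i i.is_le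
  have hrow (i : Fin (p + 1)) : α i < m + 1 :=
    Nat.lt_succ_of_le ((hα.monotoneOn (hIic i) (Set.mem_Iic.2 le_rfl) i.is_le).trans hαm)
  refine (Matrix.rank_of_isUnit_submatrix _ (fun i => ⟨α i, hrow i⟩) ?_).trans (Fintype.card_fin _)
  exact (Matrix.isUnit_iff_isUnit_det _).2 hdet.isUnit
end

section
/- Let r = [r_0, ..., r_m] and c = [c_0, ..., c_n] be strictly increasing sequences of natural numbers, and let {r̂, ĉ} be a maximal ordered sub-pair for {r, c} of length p+1. Then the rank of the matrix T_{r,c} with (i,j) entry C(c_j, r_i) is exactly p+1. -/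
/-!
The sub-pair selects a square submatrix `(C(b i, a j))` of `T_{r,c}` (transposed) with `a`, `b`
strictly increasing and `a ≤ b`, and such a matrix has positive determinant. This goes by
induction on `∑ i, (b i + 1)`: prepending `a = b = 0` reduces to the case `a 0 = 0`; then
subtracting consecutive rows and expanding along the first column leaves hockey-stick rows
`C(b (i+1), a) - C(b i, a) = ∑_{b i ≤ s < b (i+1)} C(s, a - 1)`, and multilinearity writes the
determinant as a sum of smaller determinants of the same kind over the interlacing tuples `s`.
Each is positive or zero, zero when some `s i < a i - 1` because the matrix then has a zero
block too large for full rank. Hence the rank is at least `p + 1`.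

Conversely, when `m, n > p`, maximality says that `r 0 < … < r (p+1)` and
`c (n-p-1) < … < c n` do not form an ordered sub-pair, so some `c (n-p-1+k) < r k`: the rows
`≥ k` vanish on the columns `≤ n-p-1+k`, and a matrix with a zero block has rank at most the
number of rows plus the number of columns outside it, here `k + (p + 1 - k)`.
-/

open Finset Matrix

namespace Matrix

theorem det_eq_sum_piFinset_of_row_eq_sum {n ι R : Type*} [Fintype n] [DecidableEq n]
    [DecidableEq ι] [CommRing R] (A : Matrix n n R) (S : n → Finset ι) (g : n → ι → n → R)
    (hA : ∀ i j, A i j = ∑ s ∈ S i, g i s j) :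
    A.det = ∑ s ∈ Fintype.piFinset S, (of fun i => g i (s i)).det := by
  have hrows : A = fun i => ∑ s ∈ S i, g i s := funext fun i => funext fun j => by
    rw [hA, Finset.sum_apply]
  rw [hrows]
  exact (detRowAlternating (R := R) (n := n)).toMultilinearMap.map_sum_finset g S

variable {m n R : Type*} [Fintype n] [Field R]

theorem rank_add_le (A B : Matrix m n R) : (A + B).rank ≤ A.rank + B.rank := by
  rw [rank, rank, rank, mulVecLin_add]
  exact (Submodule.finrank_mono (LinearMap.range_add_le _ _)).trans
    (Submodule.finrank_add_le_finrank_add_finrank _ _)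

theorem rank_le_card_add_card_of_forall_eq_zero [Fintype m] (A : Matrix m n R) (s : Finset m)
    (t : Finset n) (h : ∀ i ∉ s, ∀ j ∉ t, A i j = 0) : A.rank ≤ #s + #t := by
  classical
  let B : Matrix m n R := of fun i j => if i ∈ s then A i j else 0
  have hB : Function.support B.row ⊆ s := fun i hi => by
    by_contra his
    exact hi (funext fun j => if_neg his)
  have hAB : Function.support (A - B)ᵀ.row ⊆ t := fun j hj => by
    by_contra hjt
    refine hj (funext fun i => ?_)
    by_cases his : i ∈ s
    · simp [B, his]
    · simp [B, his, h i his j hjt]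
  calc A.rank = (B + (A - B)).rank := by rw [add_sub_cancel]
    _ ≤ B.rank + (A - B)ᵀ.rank := (rank_add_le _ _).trans_eq (by rw [rank_transpose])
    _ ≤ #s + #t := add_le_add (B.rank_le_card_of_support_subset s hB)
        ((A - B)ᵀ.rank_le_card_of_support_subset t hAB)

end Matrix

theorem Nat.sum_Ico_choose_add_choose {lo hi : ℕ} (h : lo ≤ hi) (k : ℕ) :
    ∑ s ∈ Ico lo hi, s.choose k + lo.choose (k + 1) = hi.choose (k + 1) := by
  induction hi, h using Nat.le_induction with
  | base => simp
  | succ hi h ih => rw [sum_Ico_succ_top h, Nat.choose_succ_succ', ← ih]; ring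

def chooseMatrix {k : ℕ} (b a : Fin k → ℕ) : Matrix (Fin k) (Fin k) ℚ :=
  of fun i j => ((b i).choose (a j) : ℚ)

def interlacing {k : ℕ} (b : Fin (k + 1) → ℕ) : Finset (Fin k → ℕ) :=
  Fintype.piFinset fun i => Ico (b i.castSucc) (b i.succ)

theorem mem_interlacing {k : ℕ} {b : Fin (k + 1) → ℕ} {s : Fin k → ℕ} :
    s ∈ interlacing b ↔ ∀ i, b i.castSucc ≤ s i ∧ s i < b i.succ := by
  simp only [interlacing, Fintype.mem_piFinset, mem_Ico]

theorem strictMono_of_mem_interlacing {k : ℕ} {b : Fin (k + 1) → ℕ} (hb : Monotone b)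
    {s : Fin k → ℕ} (hs : s ∈ interlacing b) : StrictMono s := fun i j hij =>
  (mem_interlacing.1 hs i).2.trans_le
    ((hb (Fin.succ_le_castSucc_iff.2 hij)).trans (mem_interlacing.1 hs j).1)

theorem det_chooseMatrix_eq_zero {k : ℕ} {b a : Fin k → ℕ} (hb : Monotone b) (ha : Monotone a)
    {l : Fin k} (hl : b l < a l) : (chooseMatrix b a).det = 0 := by
  by_contra hdet
  have hrank : (chooseMatrix b a).rank = k := by
    rw [rank_of_isUnit _ ((isUnit_iff_isUnit_det _).2 (Ne.isUnit hdet)), Fintype.card_fin]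
  have := (chooseMatrix b a).rank_le_card_add_card_of_forall_eq_zero (Ioi l) (Iio l)
    fun i hi j hj => by
      rw [mem_Ioi, not_lt] at hi
      rw [mem_Iio, not_lt] at hj
      exact Nat.cast_eq_zero.2 (Nat.choose_eq_zero_of_lt ((hb hi).trans_lt (hl.trans_le (ha hj))))
  rw [hrank, Fin.card_Ioi, Fin.card_Iio] at this
  omega

theorem det_chooseMatrix_cons_zero {k : ℕ} (b a : Fin k → ℕ) (ha : ∀ j, 0 < a j) :
    (chooseMatrix (Fin.cons 0 b) (Fin.cons 0 a)).det = (chooseMatrix b a).det := by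
  rw [det_succ_row_zero, Fin.sum_univ_succ]
  simp [chooseMatrix, Nat.choose_eq_zero_of_lt (ha _), submatrix]

theorem det_chooseMatrix_eq_sum {k : ℕ} {b a : Fin (k + 1) → ℕ} (hb : Monotone b)
    (ha : StrictMono a) (ha0 : a 0 = 0) :
    (chooseMatrix b a).det =
      ∑ s ∈ interlacing b, (chooseMatrix s fun j => a j.succ - 1).det := by
  set A := chooseMatrix b a
  let D : Matrix (Fin (k + 1)) (Fin (k + 1)) ℚ :=
    of (Fin.cases (A 0) fun i j => A i.succ j - A i.castSucc j)
  have hAD : A.det = D.det :=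
    det_eq_of_forall_row_eq_smul_add_pred 1 (fun _ => rfl) fun i j => by simp [D]
  have hD0 : ∀ i, D i 0 = if i = 0 then 1 else 0 := Fin.cases (by simp [D, A, chooseMatrix, ha0])
    fun i => by simp [D, A, chooseMatrix, ha0]
  have hDsucc : ∀ i j : Fin k, D i.succ j.succ =
      ∑ s ∈ Ico (b i.castSucc) (b i.succ), ((s.choose (a j.succ - 1) : ℕ) : ℚ) := fun i j => by
    have hpos : a j.succ = a j.succ - 1 + 1 := by
      have := ha (Fin.succ_pos j)
      omega
    have h := Nat.sum_Ico_choose_add_choose (hb (Fin.castSucc_le_succ i)) (a j.succ - 1)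
    rw [← hpos] at h
    simp only [D, A, chooseMatrix, of_apply, Fin.cases_succ, ← h]
    push_cast
    ring
  rw [hAD, det_succ_column_zero, Fin.sum_univ_succ]
  simp only [hD0, Fin.succ_ne_zero, if_true, if_false, mul_zero, zero_mul, sum_const_zero,
    add_zero, Fin.val_zero, pow_zero, one_mul, Fin.succAbove_zero]
  exact det_eq_sum_piFinset_of_row_eq_sum _ _ _ hDsucc

theorem sum_det_chooseMatrix_pos {k : ℕ} {b : Fin (k + 1) → ℕ} {a : Fin k → ℕ}
    (hb : StrictMono b) (ha : StrictMono a) (hab : ∀ j, a j < b j.succ)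
    (ih : ∀ s : Fin k → ℕ, StrictMono s → a ≤ s → (∀ i, s i < b i.succ) →
      0 < (chooseMatrix s a).det) :
    0 < ∑ s ∈ interlacing b, (chooseMatrix s a).det := by
  have hw : (fun i => max (b i.castSucc) (a i)) ∈ interlacing b :=
    mem_interlacing.2 fun i => ⟨le_max_left _ _, max_lt (hb Fin.castSucc_lt_succ) (hab i)⟩
  refine sum_pos' (fun s hs => ?_) ⟨_, hw, ih _ (strictMono_of_mem_interlacing hb.monotone hw)
    (fun i => le_max_right _ _) fun i => (mem_interlacing.1 hw i).2⟩
  have hs_mono := strictMono_of_mem_interlacing hb.monotone hs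
  by_cases has : a ≤ s
  · exact (ih s hs_mono has fun i => (mem_interlacing.1 hs i).2).le
  · obtain ⟨l, hl⟩ : ∃ l, s l < a l := by simpa [Pi.le_def] using has
    rw [det_chooseMatrix_eq_zero hs_mono.monotone ha.monotone hl]

theorem det_chooseMatrix_pos {k : ℕ} {b a : Fin k → ℕ} (hb : StrictMono b) (ha : StrictMono a)
    (hab : a ≤ b) : 0 < (chooseMatrix b a).det := by
  induction hN : ∑ i, (b i + 1) using Nat.strong_induction_on generalizing k b a with
  | _ N ih =>
  have pos_of_head_eq_zero : ∀ {k : ℕ} {b a : Fin (k + 1) → ℕ}, StrictMono b → StrictMono a →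
      a ≤ b → a 0 = 0 → ∑ i : Fin k, b i.succ < N → 0 < (chooseMatrix b a).det := by
    intro k b a hb ha hab ha0 hN
    have ha_pos : ∀ j : Fin k, 0 < a j.succ := fun j => ha0 ▸ ha (Fin.succ_pos j)
    have ha' : StrictMono fun j : Fin k => a j.succ - 1 := fun i j hij => by
      dsimp only
      have := ha (Fin.succ_lt_succ_iff.2 hij)
      have := ha_pos i
      omega
    rw [det_chooseMatrix_eq_sum hb.monotone ha ha0]
    refine sum_det_chooseMatrix_pos hb ha' (fun j => ?_) fun s hs has hsb =>
      ih _ ((sum_le_sum fun i _ => hsb i).trans_lt hN) hs ha' has rfl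
    have : a j.succ ≤ b j.succ := hab j.succ
    have := ha_pos j
    omega
  cases k with
  | zero => simp [det_fin_zero]
  | succ k =>
    by_cases ha0 : a 0 = 0
    · refine pos_of_head_eq_zero hb ha hab ha0 ?_
      rw [← hN, Fin.sum_univ_succ]
      have := sum_le_sum fun (i : Fin k) (_ : i ∈ univ) => Nat.le_add_right (b i.succ) 1
      omega
    · have ha_pos : ∀ j, 0 < a j := fun j =>
        (Nat.pos_of_ne_zero ha0).trans_le (ha.monotone (Fin.zero_le j))
      rw [← det_chooseMatrix_cons_zero b a ha_pos]
      refine pos_of_head_eq_zero (Fin.strictMono_cons.2 ⟨fun j => (ha_pos j).trans_le (hab j), hb⟩)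
        (Fin.strictMono_cons.2 ⟨ha_pos, ha⟩) (Fin.cons_le_cons.2 ⟨le_rfl, hab⟩) rfl ?_
      simp only [Fin.cons_succ, ← hN]
      exact sum_lt_sum_of_nonempty univ_nonempty fun i _ => Nat.lt_succ_self _

theorem strictMono_fin_of_strictMonoOn_Iic {α : Type*} [Preorder α] {f : ℕ → α} {p : ℕ}
    (hf : StrictMonoOn f (Set.Iic p)) : StrictMono fun i : Fin (p + 1) => f i :=
  fun i j hij =>
    hf (Set.mem_Iic.2 (Nat.lt_succ_iff.1 i.2)) (Set.mem_Iic.2 (Nat.lt_succ_iff.1 j.2)) hij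

theorem le_rank_pascalSub {r c α β : ℕ → ℕ} {m n p : ℕ} (hr : StrictMono r) (hc : StrictMono c)
    (h : OrderedSubPair r c m n p α β) : p + 1 ≤ (pascalSub r c m n).rank := by
  obtain ⟨hα, hβ, hαm, hβn, hle⟩ := h
  have hα' := strictMono_fin_of_strictMonoOn_Iic hα
  have hβ' := strictMono_fin_of_strictMonoOn_Iic hβ
  let α' : Fin (p + 1) → Fin (m + 1) := fun i =>
    ⟨α i, Nat.lt_succ_of_le ((hα'.monotone (Fin.le_last i)).trans hαm)⟩
  let β' : Fin (p + 1) → Fin (n + 1) := fun j =>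
    ⟨β j, Nat.lt_succ_of_le ((hβ'.monotone (Fin.le_last j)).trans hβn)⟩
  have hsub : (pascalSub r c m n).submatrix α' β' =
      (chooseMatrix (fun j => c (β j)) fun i => r (α i))ᵀ := rfl
  have hdet := det_chooseMatrix_pos (hc.comp hβ') (hr.comp hα')
    fun i => hle i (Nat.lt_succ_iff.1 i.2)
  have hunit : IsUnit ((pascalSub r c m n).submatrix α' β') := by
    rw [isUnit_iff_isUnit_det, hsub, det_transpose]
    exact hdet.ne'.isUnit
  calc p + 1 = ((pascalSub r c m n).submatrix α' β').rank := by
        rw [rank_of_isUnit _ hunit, Fintype.card_fin]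
    _ ≤ (pascalSub r c m n).rank := rank_submatrix_le _ _ _

theorem rank_pascalSub_le {r c : ℕ → ℕ} {m n p : ℕ} (hr : StrictMono r) (hc : StrictMono c)
    (h : ∀ α β, ¬OrderedSubPair r c m n (p + 1) α β) : (pascalSub r c m n).rank ≤ p + 1 := by
  rcases le_or_gt m p with hm | hm
  · exact (rank_le_height _).trans (by omega)
  rcases le_or_gt n p with hn | hn
  · exact (rank_le_width _).trans (by omega)
  obtain ⟨k, hk, hck⟩ : ∃ k ≤ p + 1, c (n - (p + 1) + k) < r k := by
    by_contra! hcon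
    exact h id (fun i => n - (p + 1) + i) ⟨strictMono_id.strictMonoOn _,
      fun i _ j _ hij => by dsimp only; omega, by simp; omega, by dsimp only; omega, hcon⟩
  refine ((pascalSub r c m n).rank_le_card_add_card_of_forall_eq_zero (Iio ⟨k, by omega⟩)
    (Ioi ⟨n - (p + 1) + k, by omega⟩) fun i hi j hj => ?_).trans ?_
  · rw [mem_Iio, not_lt, Fin.le_def] at hi
    rw [mem_Ioi, not_lt, Fin.le_def] at hj
    exact Nat.cast_eq_zero.2 (Nat.choose_eq_zero_of_lt
      ((hc.monotone hj).trans_lt (hck.trans_le (hr.monotone hi))))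
  · rw [Fin.card_Iio, Fin.card_Ioi, Fin.val_mk, Fin.val_mk]
    omega

/-- If `{r ∘ α, c ∘ β}` is a maximal ordered sub-pair of length `p + 1` for
`{[r 0, …, r m], [c 0, …, c n]}` (no ordered sub-pair has greater length), then
the Pascal submatrix `T_{r,c}` has rank exactly `p + 1`. -/
theorem pascal_rank_eq_of_maximal_orderedSubPair
    (m n p : ℕ) (r c α β : ℕ → ℕ) (hr : StrictMono r) (hc : StrictMono c)
    (hsub : OrderedSubPair r c m n p α β)
    (hmax : ∀ (q : ℕ) (α' β' : ℕ → ℕ), OrderedSubPair r c m n q α' β' → q ≤ p) :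
    (pascalSub r c m n).rank = p + 1 :=
  le_antisymm (rank_pascalSub_le hr hc fun α' β' h => (hmax _ α' β' h).not_gt p.lt_succ_self)
    (le_rank_pascalSub hr hc hsub)
end

section
/- Let r = [r_0, ..., r_m] and c = [c_0, ..., c_n] be strictly increasing sequences of natural numbers, and let {r̂, ĉ} be a maximal ordered sub-pair for {r, c} of length p+1, with ĉ a subsequence of c selected by indices β_0 < ... < β_p. Then the columns of T_{r,c} indexed by β_0, ..., β_p (i.e., the columns of T_{r,ĉ}) span the column space of T_{r,c}. -/
/-!
The minor of `T_{r,c}` on the rows `r ∘ α` and the columns `c ∘ β` is nonzero: a binomial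
determinant `det (C(c j, r i))` with `r`, `c` increasing is nonnegative, and positive when
`r i ≤ c i` for all `i`, by induction on the size and on `c 0`, applying Pascal's rule to every row
and expanding by multilinearity. So the columns `β` are independent. Conversely, a nonzero binomial
minor with increasing indices forces `r i ≤ c i`, since some term of its Leibniz expansion
survives. If a column of `T_{r,c}` were outside the span of the columns `β`, these `p + 2` columns
would carry a nonzero minor, i.e. an ordered sub-pair of length `p + 2`, contradicting maximality.
-/

open Matrix Finset

section BinomMatrix

def binomMatrix (R : Type*) [CommRing R] {k : ℕ} (r c : Fin k → ℕ) : Matrix (Fin k) (Fin k) R :=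
  Matrix.of fun i j => ((c j).choose (r i) : R)

variable {R : Type*} [CommRing R] {k : ℕ}

def predOutside (s : Finset (Fin k)) (r : Fin k → ℕ) : Fin k → ℕ :=
  fun i => if i ∈ s then r i else r i - 1

lemma det_binomMatrix_eq_det_succ {r c : Fin (k + 1) → ℕ} (hr : StrictMono r) (hr0 : r 0 = 0)
    (hc0 : c 0 = 0) :
    (binomMatrix R r c).det = (binomMatrix R (fun i => r i.succ) (fun j => c j.succ)).det := by
  rw [det_succ_column_zero, Finset.sum_eq_single 0]
  · simp [binomMatrix, hr0, hc0, submatrix]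
  · intro i _ hi
    have : 0 < r i := hr0 ▸ hr (Fin.pos_iff_ne_zero.2 hi)
    simp [binomMatrix, hc0, Nat.choose_eq_zero_of_lt this]
  · simp

lemma det_binomMatrix_eq_sum {r c : Fin k → ℕ} (hc : ∀ j, c j ≠ 0) :
    (binomMatrix R r c).det = ∑ s ∈ univ.filter (fun s => ∀ i ∉ s, r i ≠ 0),
      (binomMatrix R (predOutside s r) (fun j => c j - 1)).det := by
  set u : Fin k → Fin k → R := fun i j => ((c j - 1).choose (r i) : R)
  set v : Fin k → Fin k → R := fun i j => if r i = 0 then 0 else ((c j - 1).choose (r i - 1) : R)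
  have hsplit : binomMatrix R r c = Matrix.of (u + v) := by
    ext i j
    simp only [binomMatrix, of_apply, Pi.add_apply, u, v]
    split_ifs with hri
    · simp [hri]
    · rw [Nat.choose_eq_choose_pred_add (Nat.pos_of_ne_zero (hc j)) (Nat.pos_of_ne_zero hri)]
      push_cast
      ring
  have hpiece (s : Finset (Fin k)) (hs : ∀ i ∉ s, r i ≠ 0) :
      Matrix.of (s.piecewise u v) = binomMatrix R (predOutside s r) (fun j => c j - 1) := by
    ext i j
    by_cases hi : i ∈ s <;> simp [hi, hs, binomMatrix, predOutside, u, v]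
  have hzero (s : Finset (Fin k)) (hs : ¬∀ i ∉ s, r i ≠ 0) :
      detRowAlternating (s.piecewise u v) = 0 := by
    push Not at hs
    obtain ⟨i, hi, hri⟩ := hs
    exact det_eq_zero_of_row_eq_zero i fun j => by simp [hi, hri, v]
  rw [hsplit]
  change detRowAlternating (u + v) = _
  rw [detRowAlternating.map_add_univ,
    ← sum_filter_add_sum_filter_not univ (fun s => ∀ i ∉ s, r i ≠ 0),
    sum_eq_zero fun s hs => hzero s (mem_filter.1 hs).2, add_zero]
  exact sum_congr rfl fun s hs => by rw [← hpiece s (mem_filter.1 hs).2]; rfl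

lemma monotone_predOutside {r : Fin k → ℕ} (hr : StrictMono r) (s : Finset (Fin k)) :
    Monotone (predOutside s r) := by
  intro i j hij
  rcases hij.eq_or_lt with rfl | hlt
  · rfl
  · have := hr hlt
    unfold predOutside
    split_ifs <;> omega

lemma strictMono_predOutside_filter_lt {r c : Fin k → ℕ} (hr : StrictMono r) (hc : StrictMono c)
    (hc0 : ∀ j, c j ≠ 0) (hle : ∀ i, r i ≤ c i) :
    StrictMono (predOutside (univ.filter fun i => r i < c i) r) := by
  intro i j hij
  have : r i < r j := hr hij
  have : c i < c j := hc hij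
  have := hle i
  have := hle j
  have := hc0 i
  simp only [predOutside, mem_filter, mem_univ, true_and]
  split_ifs <;> omega

lemma le_of_det_binomMatrix_ne_zero {r c : Fin k → ℕ} (hr : Monotone r) (hc : Monotone c)
    (hdet : (binomMatrix R r c).det ≠ 0) (i : Fin k) : r i ≤ c i := by
  rw [det_apply] at hdet
  obtain ⟨σ, -, hσ⟩ := exists_ne_zero_of_sum_ne_zero hdet
  have hσle (l : Fin k) : r (σ l) ≤ c l := by
    by_contra! h
    refine hσ ?_
    rw [prod_eq_zero (mem_univ l) (by simp [binomMatrix, Nat.choose_eq_zero_of_lt h]), smul_zero]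
  -- pigeonhole: `σ` cannot map `Iic i` injectively into `Iio i`
  obtain ⟨l, hli, hil⟩ : ∃ l ≤ i, i ≤ σ l := by
    by_contra! h
    have := card_le_card_of_injOn σ (fun a ha => mem_Iio.2 (h a (mem_Iic.1 ha))) σ.injective.injOn
    simp at this
  calc r i ≤ r (σ l) := hr hil
    _ ≤ c l := hσle l
    _ ≤ c i := hc hli

lemma det_binomMatrix_nonneg_of_monotone [PartialOrder R] {r c : Fin k → ℕ}
    (H : ∀ r : Fin k → ℕ, StrictMono r → 0 ≤ (binomMatrix R r c).det) (hr : Monotone r) :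
    0 ≤ (binomMatrix R r c).det := by
  by_cases hinj : Function.Injective r
  · exact H r (hr.strictMono_of_injective hinj)
  · obtain ⟨i, j, hij, hne⟩ := Function.not_injective_iff.1 hinj
    rw [det_zero_of_row_eq hne (by ext; simp [binomMatrix, hij])]

variable [PartialOrder R] [IsStrictOrderedRing R]

lemma det_binomMatrix_nonneg_and_pos {r c : Fin k → ℕ} (hr : StrictMono r)
    (hc : StrictMono c) :
    0 ≤ (binomMatrix R r c).det ∧ ((∀ i, r i ≤ c i) → 0 < (binomMatrix R r c).det) := by
  induction k with
  | zero => simp [det_fin_zero]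
  | succ k ihk =>
    obtain ⟨n, hn⟩ : ∃ n, c 0 = n := ⟨_, rfl⟩
    induction n generalizing r c with
    | zero =>
      by_cases hr0 : r 0 = 0
      · rw [det_binomMatrix_eq_det_succ hr hr0 hn]
        exact (ihk (hr.comp Fin.strictMono_succ) (hc.comp Fin.strictMono_succ)).imp_right
          fun h hle => h fun i => hle i.succ
      · have hcol : (binomMatrix R r c).det = 0 := det_eq_zero_of_column_eq_zero 0 fun i => by
          have : r 0 ≤ r i := hr.monotone (Fin.zero_le i)
          have : c 0 < r i := by omega
          simp [binomMatrix, Nat.choose_eq_zero_of_lt this]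
        exact ⟨hcol.ge, fun hle => absurd (hle 0) (by omega)⟩
    | succ n ihn =>
      have hc0 (j : Fin (k + 1)) : c j ≠ 0 := by
        have := hc.monotone (Fin.zero_le j)
        omega
      have hc' : StrictMono fun j => c j - 1 := fun i j hij => by
        have : c i < c j := hc hij
        have := hc0 i
        show c i - 1 < c j - 1
        omega
      have hc'0 : c 0 - 1 = n := by omega
      have hterm (s : Finset (Fin (k + 1))) :
          0 ≤ (binomMatrix R (predOutside s r) (fun j => c j - 1)).det :=
        det_binomMatrix_nonneg_of_monotone (fun r' hr' => (ihn hr' hc' hc'0).1)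
          (monotone_predOutside hr s)
      rw [det_binomMatrix_eq_sum hc0]
      refine ⟨sum_nonneg fun s _ => hterm s, fun hle => sum_pos' (fun s _ => hterm s)
        ⟨univ.filter fun i => r i < c i, ?_, ?_⟩⟩
      · simp only [mem_filter, mem_univ, true_and, not_lt]
        intro i hi
        have := hc0 i
        omega
      · refine (ihn (strictMono_predOutside_filter_lt hr hc hc0 hle) hc' hc'0).2 fun i => ?_
        have := hle i
        simp only [predOutside, mem_filter, mem_univ, true_and]
        split_ifs <;> omega

lemma det_binomMatrix_pos {r c : Fin k → ℕ} (hr : StrictMono r) (hc : StrictMono c)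
    (hle : ∀ i, r i ≤ c i) : 0 < (binomMatrix R r c).det :=
  (det_binomMatrix_nonneg_and_pos hr hc).2 hle

end BinomMatrix

section Minors

variable {K : Type*} [Field K] {m n : Type*} {k : ℕ}

lemma linearIndependent_col_comp_of_det_submatrix_ne_zero {ι : Type*} [Fintype ι] [DecidableEq ι]
    {A : Matrix m n K} {f : ι → m} {g : ι → n} (h : (A.submatrix f g).det ≠ 0) :
    LinearIndependent K (A.col ∘ g) :=
  have : LinearIndependent K (A.submatrix f g).col :=
    linearIndependent_cols_iff_isUnit.2 ((isUnit_iff_isUnit_det _).2 (Ne.isUnit h))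
  this.of_comp (LinearMap.funLeft K K f)

lemma exists_det_submatrix_ne_zero [Fintype m] {A : Matrix m n K} {g : Fin k → n}
    (h : LinearIndependent K (A.col ∘ g)) : ∃ f : Fin k → m, (A.submatrix f g).det ≠ 0 := by
  set B := A.submatrix id g
  have hrank : B.rank = k := by
    rw [rank_eq_finrank_span_cols, show B.col = A.col ∘ g from rfl, finrank_span_eq_card h,
      Fintype.card_fin]
  have hrows : Submodule.span K (Set.range B.row) = ⊤ :=
    Submodule.eq_top_of_finrank_eq <| by
      rw [← rank_eq_finrank_span_row, hrank, Module.finrank_fin_fun]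
  obtain ⟨κ, a, -, hspan, hli⟩ := exists_linearIndependent' K B.row
  let b := Module.Basis.mk hli (by rw [hspan, hrows])
  let e : Fin k ≃ κ := (Pi.basisFun K (Fin k)).indexEquiv b
  refine ⟨a ∘ e, (isUnit_iff_isUnit_det _).1 (linearIndependent_rows_iff_isUnit.1 ?_) |>.ne_zero⟩
  exact hli.comp e e.injective

lemma exists_strictMono_det_submatrix_ne_zero {R : Type*} [CommRing R] [LinearOrder m]
    [LinearOrder n] {A : Matrix m n R} {f : Fin k → m} {g : Fin k → n}
    (h : (A.submatrix f g).det ≠ 0) :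
    ∃ (f' : Fin k → m) (g' : Fin k → n), StrictMono f' ∧ StrictMono g' ∧
      (A.submatrix f' g').det ≠ 0 := by
  have hf : Function.Injective f := fun a b hab => by
    by_contra hne
    exact h (det_zero_of_row_eq hne (by ext; simp [hab]))
  have hg : Function.Injective g := fun a b hab => by
    by_contra hne
    exact h (det_zero_of_column_eq hne (by simp [hab]))
  refine ⟨f ∘ Tuple.sort f, g ∘ Tuple.sort g,
    (Tuple.monotone_sort f).strictMono_of_injective (hf.comp (Equiv.injective _)),
    (Tuple.monotone_sort g).strictMono_of_injective (hg.comp (Equiv.injective _)), ?_⟩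
  rw [show A.submatrix (f ∘ Tuple.sort f) (g ∘ Tuple.sort g)
      = ((A.submatrix f g).submatrix (Tuple.sort f) id).submatrix id (Tuple.sort g) from rfl,
    det_permute', det_permute]
  have hsign (σ : Equiv.Perm (Fin k)) : IsUnit ((Equiv.Perm.sign σ : ℤ) : R) :=
    (Equiv.Perm.sign σ).isUnit.map (Int.castRingHom R)
  simpa [(hsign _).mul_right_eq_zero] using h

end Minors

section OrderedSubPair

variable {r c α β : ℕ → ℕ} {m n p : ℕ}

lemma OrderedSubPair.exists_fin (h : OrderedSubPair r c m n p α β) :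
    ∃ (f : Fin (p + 1) → Fin (m + 1)) (g : Fin (p + 1) → Fin (n + 1)), StrictMono f ∧
      StrictMono g ∧ (∀ j, (g j : ℕ) = β j) ∧ ∀ i, r (f i) ≤ c (g i) := by
  obtain ⟨hα, hβ, hαm, hβn, hle⟩ := h
  have hbound {γ : ℕ → ℕ} {N : ℕ} (hγ : StrictMonoOn γ (Set.Iic p)) (hN : γ p ≤ N)
      (i : Fin (p + 1)) : γ i < N + 1 :=
    Nat.lt_succ_of_le ((hγ.monotoneOn i.is_le Set.self_mem_Iic i.is_le).trans hN)
  exact ⟨fun i => ⟨α i, hbound hα hαm i⟩, fun i => ⟨β i, hbound hβ hβn i⟩,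
    fun i j hij => hα i.is_le j.is_le hij, fun i j hij => hβ i.is_le j.is_le hij,
    fun _ => rfl, fun i => hle i i.is_le⟩

lemma orderedSubPair_of_fin {f : Fin (p + 1) → Fin (m + 1)} {g : Fin (p + 1) → Fin (n + 1)}
    (hf : StrictMono f) (hg : StrictMono g) (hle : ∀ i, r (f i) ≤ c (g i)) :
    OrderedSubPair r c m n p (fun i => f (Fin.clamp i p)) (fun i => g (Fin.clamp i p)) := by
  have hclamp {a b : ℕ} (hb : b ≤ p) (hab : a < b) : Fin.clamp a p < Fin.clamp b p := by
    rw [Fin.lt_def, Fin.coe_clamp, Fin.coe_clamp]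
    omega
  exact ⟨fun a _ b hb hab => hf (hclamp hb hab), fun a _ b hb hab => hg (hclamp hb hab),
    (f _).is_le, (g _).is_le, fun i _ => hle _⟩

end OrderedSubPair

/-- If `{r ∘ α, c ∘ β}` is a maximal ordered sub-pair of length `p + 1` for
`{[r 0, …, r m], [c 0, …, c n]}`, then the columns of `T_{r,c}` indexed by
`β 0, …, β p` (i.e. the columns of `T_{r,ĉ}`) span the column space of
`T_{r,c}`. -/
theorem pascal_maximal_orderedSubPair_columns_span
    (m n p : ℕ) (r c α β : ℕ → ℕ) (hr : StrictMono r) (hc : StrictMono c)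
    (hsub : OrderedSubPair r c m n p α β)
    (hmax : ∀ (q : ℕ) (α' β' : ℕ → ℕ), OrderedSubPair r c m n q α' β' → q ≤ p) :
    Submodule.span ℚ {x : Fin (m + 1) → ℚ | ∃ j ≤ p,
        x = fun i : Fin (m + 1) => ((c (β j)).choose (r (i : ℕ)) : ℚ)} =
      Submodule.span ℚ
        (Set.range fun j : Fin (n + 1) => (pascalSub r c m n).transpose j) := by
  set A := pascalSub r c m n
  obtain ⟨f, g, hf, hg, hgβ, hle⟩ := hsub.exists_fin
  have hcols : {x : Fin (m + 1) → ℚ | ∃ j ≤ p,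
      x = fun i : Fin (m + 1) => ((c (β j)).choose (r (i : ℕ)) : ℚ)} = Set.range (A.col ∘ g) := by
    ext x
    constructor
    · rintro ⟨j, hj, rfl⟩
      exact ⟨⟨j, by omega⟩, by ext; simp [A, pascalSub, hgβ]⟩
    · rintro ⟨l, rfl⟩
      exact ⟨l, l.is_le, by ext; simp [A, pascalSub, hgβ]⟩
  have hli : LinearIndependent ℚ (A.col ∘ g) :=
    linearIndependent_col_comp_of_det_submatrix_ne_zero (f := f)
      (det_binomMatrix_pos (hr.comp hf) (hc.comp hg) hle).ne'
  rw [hcols]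
  refine le_antisymm (Submodule.span_mono (Set.range_comp_subset_range _ _))
    (Submodule.span_le.2 ?_)
  rintro _ ⟨j, rfl⟩
  by_contra hj
  have hliSnoc : LinearIndependent ℚ (A.col ∘ Fin.snoc g j) := by
    rw [Fin.comp_snoc]
    exact linearIndependent_finSnoc.2 ⟨hli, hj⟩
  obtain ⟨f₁, hf₁⟩ := exists_det_submatrix_ne_zero hliSnoc
  obtain ⟨f₂, g₂, hf₂, hg₂, hdet⟩ := exists_strictMono_det_submatrix_ne_zero hf₁
  have := hmax _ _ _ <| orderedSubPair_of_fin hf₂ hg₂ <|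
    le_of_det_binomMatrix_ne_zero (hr.comp hf₂).monotone (hc.comp hg₂).monotone hdet
  omega
end

section
/- Let r = [r_0, ..., r_m] and c = [c_0, ..., c_n] be strictly increasing sequences of natural numbers with r_0 ≤ c_n. Define β_0 to be the least k with r_0 ≤ c_k, and recursively, for each i ≥ 1 with r_i ≤ c_n, define β_i to be the maximum of (the least k with r_i ≤ c_k) and β_{i-1} + 1. Let p be the largest index i for which β_i is defined and β_i ≤ n. Then the pair {[r_0, ..., r_p], [c_{β_0}, ..., c_{β_p}]} is a maximal ordered sub-pair for {r, c}. -/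
/-- The column indices produced by the algorithm: `algBeta r c 0` is the least
`k` with `r 0 ≤ c k`, and `algBeta r c (i+1)` is the maximum of the least `k`
with `r (i+1) ≤ c k` and `algBeta r c i + 1`. -/
noncomputable def algBeta (r c : ℕ → ℕ) : ℕ → ℕ
  | 0 => sInf {k | r 0 ≤ c k}
  | i + 1 => max (sInf {k | r (i + 1) ≤ c k}) (algBeta r c i + 1)

section algBeta

variable {r c : ℕ → ℕ}

lemma sInf_le_algBeta (i : ℕ) : sInf {k | r i ≤ c k} ≤ algBeta r c i := by
  cases i with
  | zero => exact le_rfl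
  | succ i => exact le_max_left _ _

lemma algBeta_strictMono : StrictMono (algBeta r c) :=
  strictMono_nat_of_lt_succ fun _ => Nat.lt_of_succ_le (le_max_right _ _)

lemma apply_le_apply_algBeta (hc : StrictMono c) (i : ℕ) : r i ≤ c (algBeta r c i) :=
  (Nat.sInf_mem (s := {k | r i ≤ c k}) ⟨r i, hc.le_apply⟩).trans
    (hc.monotone (sInf_le_algBeta i))

lemma orderedSubPair_id_algBeta (hc : StrictMono c) {m n p : ℕ} (hpm : p ≤ m)
    (hpn : algBeta r c p ≤ n) : OrderedSubPair r c m n p id (algBeta r c) :=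
  ⟨strictMono_id.strictMonoOn _, algBeta_strictMono.strictMonoOn _, hpm, hpn,
    fun i _ => apply_le_apply_algBeta hc i⟩

lemma algBeta_le_of_strictMonoOn (hr : Monotone r) {q : ℕ} {α β : ℕ → ℕ}
    (hα : StrictMonoOn α (Set.Iic q)) (hβ : StrictMonoOn β (Set.Iic q))
    (hrc : ∀ i ≤ q, r (α i) ≤ c (β i)) : ∀ i ≤ q, algBeta r c i ≤ β i := by
  have hcol : ∀ i ≤ q, sInf {k | r i ≤ c k} ≤ β i := fun i hi =>
    Nat.sInf_le ((hr (hα.Iic_id_le i hi)).trans (hrc i hi))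
  intro i hi
  induction i with
  | zero => exact hcol 0 hi
  | succ i ih =>
    have hiq : i ≤ q := Nat.le_of_succ_le hi
    have hstep : β i < β (i + 1) := hβ (Set.mem_Iic.2 hiq) (Set.mem_Iic.2 hi) i.lt_succ_self
    exact max_le (hcol _ hi) ((ih hiq).trans_lt hstep)

end algBeta

/-- If `r 0 ≤ c n` and `p` is the largest index `i ≤ m` for which the
algorithm's value `β i` satisfies `β i ≤ n`, then the pair
`{[r 0, …, r p], [c (β 0), …, c (β p)]}` is a maximal ordered sub-pair for
`{[r 0, …, r m], [c 0, …, c n]}`. -/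
theorem pascal_algorithm_maximal_orderedSubPair
    (m n : ℕ) (r c : ℕ → ℕ) (hr : StrictMono r) (hc : StrictMono c)
    (h0 : r 0 ≤ c n)
    (p : ℕ) (hp : p = sSup {i | i ≤ m ∧ algBeta r c i ≤ n}) :
    OrderedSubPair r c m n p id (algBeta r c) ∧
      ∀ (q : ℕ) (α' β' : ℕ → ℕ), OrderedSubPair r c m n q α' β' → q ≤ p := by
  set S : Set ℕ := {i | i ≤ m ∧ algBeta r c i ≤ n}
  have hbdd : BddAbove S := ⟨m, fun _ hi => hi.1⟩
  have hpS : p ∈ S := hp ▸ Nat.sSup_mem ⟨0, Nat.zero_le m, Nat.sInf_le h0⟩ hbdd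
  refine ⟨orderedSubPair_id_algBeta hc hpS.1 hpS.2, ?_⟩
  rintro q α β ⟨hα, hβ, hαq, hβq, hrc⟩
  have hqS : q ∈ S :=
    ⟨(hα.Iic_id_le q le_rfl).trans hαq,
      (algBeta_le_of_strictMonoOn hr.monotone hα hβ hrc q le_rfl).trans hβq⟩
  exact hp ▸ le_csSup hbdd hqS
end

section
/- Let r = [r_0, ..., r_m] and c = [c_0, ..., c_n] be strictly increasing sequences of natural numbers with r_0 ≤ c_n. Then there exists a maximal ordered sub-pair {r̂, ĉ} for {r, c} whose row part r̂ is an initial segment of r, i.e., r̂ = [r_0, r_1, ..., r_p] for some p. -/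
namespace OrderedSubPair

variable {r c : ℕ → ℕ} {m n q : ℕ} {α β : ℕ → ℕ}

theorem le (h : OrderedSubPair r c m n q α β) : q ≤ m :=
  (h.1.Iic_id_le q le_rfl).trans h.2.2.1

theorem id_rows (hr : Monotone r) (h : OrderedSubPair r c m n q α β) :
    OrderedSubPair r c m n q id β := by
  obtain ⟨hα, hβ, -, hβn, hrc⟩ := id h
  exact ⟨strictMono_id.strictMonoOn _, hβ, h.le, hβn,
    fun i hi => (hr (hα.Iic_id_le i hi)).trans (hrc i hi)⟩

theorem zero_id_const (h0 : r 0 ≤ c n) : OrderedSubPair r c m n 0 id fun _ => n := by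
  refine ⟨strictMono_id.strictMonoOn _, fun a ha b hb hab => ?_, Nat.zero_le m, le_rfl, ?_⟩
  · simp only [Set.mem_Iic, Nat.le_zero] at ha hb
    omega
  · intro i hi
    rwa [Nat.le_zero.mp hi]

end OrderedSubPair

theorem pascal_exists_maximal_orderedSubPair_initial_rows_general
    (m n : ℕ) (r c : ℕ → ℕ) (hr : StrictMono r)
    (h0 : r 0 ≤ c n) :
    ∃ (p : ℕ) (β : ℕ → ℕ), OrderedSubPair r c m n p id β ∧
      ∀ (q : ℕ) (α' β' : ℕ → ℕ), OrderedSubPair r c m n q α' β' → q ≤ p := by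
  classical
  let HasIdRows : ℕ → Prop := fun q => ∃ β, OrderedSubPair r c m n q id β
  obtain ⟨β, hβ⟩ : HasIdRows (Nat.findGreatest HasIdRows m) :=
    Nat.findGreatest_spec (Nat.zero_le m) ⟨_, OrderedSubPair.zero_id_const h0⟩
  exact ⟨_, β, hβ, fun q α' β' h => Nat.le_findGreatest h.le ⟨β', h.id_rows hr.monotone⟩⟩

/-- If `r 0 ≤ c n`, then there is a maximal ordered sub-pair for
`{[r 0, …, r m], [c 0, …, c n]}` whose row part is an initial segment
`[r 0, …, r p]` of `r` (i.e. the row selection is the identity). -/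
theorem pascal_exists_maximal_orderedSubPair_initial_rows
    (m n : ℕ) (r c : ℕ → ℕ) (hr : StrictMono r) (hc : StrictMono c)
    (h0 : r 0 ≤ c n) :
    ∃ (p : ℕ) (β : ℕ → ℕ), OrderedSubPair r c m n p id β ∧
      ∀ (q : ℕ) (α' β' : ℕ → ℕ), OrderedSubPair r c m n q α' β' → q ≤ p :=
  pascal_exists_maximal_orderedSubPair_initial_rows_general m n r c hr h0
end

section
/- Let r = [r_0, ..., r_m] and c = [c_0, ..., c_n] be strictly increasing sequences of natural numbers, and let {r̂, ĉ} be a maximal ordered sub-pair for {r, c} of length p+1. Then every (p+2)×(p+2) square submatrix of the matrix T_{r,c} (with (i,j) entry C(c_j, r_i)), obtained by selecting any p+2 rows and any p+2 columns, is singular. -/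
theorem Equiv.Perm.exists_le_le_apply_s16 {ι : Type*} [LinearOrder ι] [LocallyFiniteOrderBot ι]
    (σ : Equiv.Perm ι) (k : ι) : ∃ j ≤ k, k ≤ σ j := by
  by_contra! h
  have hmaps : Set.MapsTo σ (Finset.Iic k) (Finset.Iio k) := fun j hj => by
    simpa using h j (Finset.mem_Iic.mp hj)
  have hcard := Finset.card_le_card_of_injOn σ hmaps σ.injective.injOn
  rw [← Finset.Iio_insert, Finset.card_insert_of_notMem (by simp)] at hcard
  omega

theorem Matrix.det_eq_zero_of_lowerLeft_block_eq_zero {ι R : Type*} [Fintype ι] [LinearOrder ι]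
    [LocallyFiniteOrderBot ι] [CommRing R] (M : Matrix ι ι R) (k : ι)
    (h : ∀ i j, k ≤ i → j ≤ k → M i j = 0) : M.det = 0 := by
  rw [Matrix.det_apply]
  refine Finset.sum_eq_zero fun σ _ => ?_
  obtain ⟨j, hjk, hkσj⟩ := σ.exists_le_le_apply_s16 k
  rw [Finset.prod_eq_zero (f := fun i => M (σ i) i) (Finset.mem_univ j) (h _ _ hkσj hjk), smul_zero]

theorem pascal_submatrix_singular_of_maximal_orderedSubPair_general
    (m n p : ℕ) (r c : ℕ → ℕ) (hr : StrictMono r) (hc : StrictMono c)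
    (hmax : ∀ (q : ℕ) (α' β' : ℕ → ℕ), OrderedSubPair r c m n q α' β' → q ≤ p)
    (α' β' : ℕ → ℕ)
    (hα' : StrictMonoOn α' (Set.Iic (p + 1)))
    (hβ' : StrictMonoOn β' (Set.Iic (p + 1)))
    (hα'm : α' (p + 1) ≤ m) (hβ'n : β' (p + 1) ≤ n) :
    (Matrix.of fun i j : Fin (p + 2) =>
        ((c (β' (j : ℕ))).choose (r (α' (i : ℕ))) : ℚ)).det = 0 := by
  obtain ⟨k, hkp, hk⟩ : ∃ k ≤ p + 1, c (β' k) < r (α' k) := by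
    by_contra! h
    exact (hmax (p + 1) α' β' ⟨hα', hβ', hα'm, hβ'n, h⟩).not_gt (Nat.lt_succ_self p)
  have hrα' := (hr.comp_strictMonoOn hα').monotoneOn
  have hcβ' := (hc.comp_strictMonoOn hβ').monotoneOn
  refine Matrix.det_eq_zero_of_lowerLeft_block_eq_zero _ ⟨k, by omega⟩ fun i j hki hjk => ?_
  have hi : (i : ℕ) ∈ Set.Iic (p + 1) := Set.mem_Iic.mpr (Nat.le_of_lt_succ i.2)
  have hj : (j : ℕ) ∈ Set.Iic (p + 1) := Set.mem_Iic.mpr (Nat.le_of_lt_succ j.2)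
  have hcr : c (β' j) < r (α' i) :=
    calc c (β' j) ≤ c (β' k) := hcβ' hj hkp hjk
      _ < r (α' k) := hk
      _ ≤ r (α' i) := hrα' hkp hi hki
  simp [Nat.choose_eq_zero_of_lt hcr]

/-- If `{r ∘ α, c ∘ β}` is a maximal ordered sub-pair of length `p + 1` for
`{[r 0, …, r m], [c 0, …, c n]}`, then every `(p+2) × (p+2)` square submatrix of
`T_{r,c}`, obtained by selecting any `p + 2` rows (via a strictly increasing
index selection `α'`) and any `p + 2` columns (via `β'`), is singular. -/
theorem pascal_submatrix_singular_of_maximal_orderedSubPair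
    (m n p : ℕ) (r c α β : ℕ → ℕ) (hr : StrictMono r) (hc : StrictMono c)
    (hsub : OrderedSubPair r c m n p α β)
    (hmax : ∀ (q : ℕ) (α' β' : ℕ → ℕ), OrderedSubPair r c m n q α' β' → q ≤ p)
    (α' β' : ℕ → ℕ)
    (hα' : StrictMonoOn α' (Set.Iic (p + 1)))
    (hβ' : StrictMonoOn β' (Set.Iic (p + 1)))
    (hα'm : α' (p + 1) ≤ m) (hβ'n : β' (p + 1) ≤ n) :
    (Matrix.of fun i j : Fin (p + 2) =>
        ((c (β' (j : ℕ))).choose (r (α' (i : ℕ))) : ℚ)).det = 0 :=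
  pascal_submatrix_singular_of_maximal_orderedSubPair_general m n p r c hr hc hmax α' β' hα' hβ'
    hα'm hβ'n
end
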